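/- arXiv:2202.13222 — 4 statements merged into one kernel-verified Lean document; each statement's English description precedes it below -/
import Mathlib

section
/- Let 1 ≤ k < N and let f be a polynomial in the variables x₁, …, x_k (with complex coefficients), viewed as a polynomial in N variables. Then there exists a unique polynomial g in the variables x₁, …, x_k such that for every x ∈ S^{N−1}(√N), g(x) = (1/N) (Σ_{1≤i<j≤N} (x_i ∂/∂x_j − x_j ∂/∂x_i)² f)(x); moreover this unique polynomial is given explicitly by g = Δ_k f − (r∂_r)_k f + (1/N)(2 (r∂_r)_k f − (r∂_r)_k² f). -/
/-!
On polynomials, `Σ_{i<j} (x_i ∂_j − x_j ∂_i)² = r² Δ_N − (r∂_r)_N² − (N − 2)(r∂_r)_N` with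
`r² = Σ x_j²`; this is a purely algebraic identity. For a polynomial in the first `k` variables,
`Δ_N` and `(r∂_r)_N` act as `Δ_k` and `(r∂_r)_k`, and `r² = N` on the sphere, which gives the
formula for `g`. Uniqueness holds because the sphere projects onto the ball of radius `√N` in the
first `k < N` coordinates, and a polynomial vanishing on a box with infinite sides is zero.
-/

open MvPolynomial

/-- The Laplacian `Δ_k = Σ_j ∂²/∂x_j²` on polynomials. -/
noncomputable def lap {k : ℕ} (p : MvPolynomial (Fin k) ℂ) : MvPolynomial (Fin k) ℂ :=
  ∑ j, pderiv j (pderiv j p)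

/-- The Cauchy–Euler operator `(r∂_r)_k = Σ_j x_j ∂/∂x_j` on polynomials. -/
noncomputable def euler {k : ℕ} (p : MvPolynomial (Fin k) ℂ) : MvPolynomial (Fin k) ℂ :=
  ∑ j, X j * pderiv j p

/-- The angular momentum operator `x_i ∂/∂x_j − x_j ∂/∂x_i` on polynomials. -/
noncomputable def rot {N : ℕ} (i j : Fin N) (p : MvPolynomial (Fin N) ℂ) :
    MvPolynomial (Fin N) ℂ :=
  X i * pderiv j p - X j * pderiv i p

/-- The operator `Σ_{i<j} (x_i ∂/∂x_j − x_j ∂/∂x_i)²` on polynomials. -/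
noncomputable def ang {N : ℕ} (p : MvPolynomial (Fin N) ℂ) : MvPolynomial (Fin N) ℂ :=
  ∑ i, ∑ j ∈ Finset.Ioi i, rot i j (rot i j p)

theorem MvPolynomial.pderiv_pderiv_comm {R σ : Type*} [CommSemiring R] (i j : σ)
    (p : MvPolynomial σ R) : pderiv i (pderiv j p) = pderiv j (pderiv i p) := by
  classical
  have hconst : ∀ a b n : σ, pderiv a (Pi.single (M := fun _ => MvPolynomial σ R) b 1 n) = 0 := by
    intro a b n
    rcases eq_or_ne n b with rfl | h <;> simp [*]
  induction p using MvPolynomial.induction_on with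
  | C a => simp
  | add p q hp hq => simp [hp, hq]
  | mul_X p n ih =>
    simp only [pderiv_mul, map_add, pderiv_X, ih, hconst]
    abel

open Finset in
theorem Finset.sum_sum_Ioi_add_swap {ι M : Type*} [LinearOrder ι] [Fintype ι]
    [LocallyFiniteOrderTop ι] [LocallyFiniteOrderBot ι] [AddCommMonoid M] (g : ι → ι → M) :
    ∑ i, ∑ j ∈ Ioi i, (g i j + g j i) + ∑ i, g i i = ∑ i, ∑ j, g i j := by
  have hswap : ∑ i, ∑ j ∈ Ioi i, g j i = ∑ i, ∑ j ∈ Iio i, g i j :=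
    Finset.sum_comm' (by simp)
  simp only [sum_add_distrib, hswap]
  rw [← sum_add_distrib, ← sum_add_distrib]
  refine sum_congr rfl fun i _ => ?_
  have hsplit : Iio i ∪ Ici i = univ := by ext j; simp [lt_or_ge]
  have hdisj : Disjoint (Iio i) (Ici i) :=
    disjoint_left.2 fun j hj hj' => (mem_Iio.1 hj).not_ge (mem_Ici.1 hj')
  rw [← hsplit, sum_union hdisj, ← add_sum_Ioi_eq_sum_Ici]
  abel

section Operators

variable {n : ℕ}

lemma rot_rot_of_ne {i j : Fin n} (h : i ≠ j) (F : MvPolynomial (Fin n) ℂ) :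
    rot i j (rot i j F) =
      (X i ^ 2 * pderiv j (pderiv j F) - X i * X j * pderiv i (pderiv j F) - X i * pderiv i F) +
      (X j ^ 2 * pderiv i (pderiv i F) - X j * X i * pderiv j (pderiv i F) - X j * pderiv j F) := by
  simp only [rot, map_sub, pderiv_mul, pderiv_X_self, pderiv_X_of_ne h, pderiv_X_of_ne h.symm,
    pderiv_pderiv_comm j i]
  ring

lemma euler_euler (F : MvPolynomial (Fin n) ℂ) :
    euler (euler F) = euler F + ∑ i, ∑ j, X i * X j * pderiv i (pderiv j F) := by
  have hdiag : ∀ i, ∑ j, X i * (pderiv i (X j) * pderiv j F) = X i * pderiv i F := fun i => by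
    simp [pderiv_X, Pi.single_apply]
  simp only [euler, map_sum, pderiv_mul, Finset.mul_sum, mul_add, Finset.sum_add_distrib, hdiag,
    mul_assoc]

lemma ang_eq_lap_euler (F : MvPolynomial (Fin n) ℂ) :
    ang F = (∑ i, X i ^ 2) * lap F + 2 • euler F - euler (euler F) - n • euler F := by
  set g : Fin n → Fin n → MvPolynomial (Fin n) ℂ := fun i j =>
    X i ^ 2 * pderiv j (pderiv j F) - X i * X j * pderiv i (pderiv j F) - X i * pderiv i F
  have hang : ang F = ∑ i, ∑ j ∈ Finset.Ioi i, (g i j + g j i) :=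
    Finset.sum_congr rfl fun i _ => Finset.sum_congr rfl fun j hj =>
      rot_rot_of_ne (Finset.mem_Ioi.1 hj).ne F
  have hdiag : ∑ i, g i i = -euler F := by
    simp only [g, euler, ← Finset.sum_neg_distrib]
    exact Finset.sum_congr rfl fun i _ => by ring
  have hall : ∑ i, ∑ j, g i j =
      (∑ i, X i ^ 2) * lap F - (euler (euler F) - euler F) - n • euler F := by
    rw [euler_euler, add_sub_cancel_left]
    simp only [g, Finset.sum_sub_distrib, lap, Finset.sum_mul_sum, euler, Finset.sum_const,
      Finset.card_univ, Fintype.card_fin, Finset.smul_sum]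
  rw [hang, eq_sub_of_add_eq (Finset.sum_sum_Ioi_add_swap g), hall, hdiag]
  abel

end Operators

section Rename

variable {k n : ℕ} {e : Fin k → Fin n}

lemma pderiv_rename_of_notMem_range (f : MvPolynomial (Fin k) ℂ) {j : Fin n}
    (hj : j ∉ Set.range e) : pderiv j (rename e f) = 0 :=
  pderiv_eq_zero_of_notMem_vars fun hmem =>
    let ⟨i, _, hi⟩ := mem_vars_rename _ _ hmem
    hj ⟨i, hi⟩

lemma lap_rename (he : Function.Injective e) (f : MvPolynomial (Fin k) ℂ) :
    lap (rename e f) = rename e (lap f) := by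
  rw [lap, lap, map_sum]
  refine (Fintype.sum_of_injective e he _ _ (fun j hj => ?_) fun i => ?_).symm
  · rw [pderiv_rename_of_notMem_range f hj, map_zero]
  · rw [pderiv_rename he, pderiv_rename he]

lemma euler_rename (he : Function.Injective e) (f : MvPolynomial (Fin k) ℂ) :
    euler (rename e f) = rename e (euler f) := by
  rw [euler, euler, map_sum]
  refine (Fintype.sum_of_injective e he _ _ (fun j hj => ?_) fun i => ?_).symm
  · rw [pderiv_rename_of_notMem_range f hj, mul_zero]
  · rw [pderiv_rename he, map_mul, rename_X]

lemma ang_rename (he : Function.Injective e) (f : MvPolynomial (Fin k) ℂ) :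
    ang (rename e f) = (∑ j, X j ^ 2) * rename e (lap f) +
      rename e (2 • euler f - euler (euler f) - n • euler f) := by
  rw [ang_eq_lap_euler, lap_rename he, euler_rename he, euler_rename he, map_sub, map_sub, map_nsmul,
    map_nsmul]
  abel

lemma aeval_ang_rename_of_sum_sq_eq (he : Function.Injective e) (f : MvPolynomial (Fin k) ℂ)
    (hn : n ≠ 0) {x : Fin n → ℂ} (hx : ∑ j, x j ^ 2 = n) :
    aeval (x ∘ e) (lap f - euler f + (n : ℂ)⁻¹ • (2 • euler f - euler (euler f))) =
      1 / n * aeval x (ang (rename e f)) := by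
  rw [ang_rename he]
  simp only [map_add, map_sub, map_mul, map_sum, map_pow, aeval_X, hx, map_smul, aeval_rename,
    smul_eq_mul, nsmul_eq_mul, map_natCast]
  field_simp
  ring

end Rename

lemma exists_sum_sq_eq_of_sum_sq_le {k N : ℕ} (hkN : k < N) (y : Fin k → ℝ)
    (hy : ∑ j, y j ^ 2 ≤ N) :
    ∃ x : Fin N → ℝ, ∑ j, x j ^ 2 = N ∧ ∀ j, x (Fin.castLE hkN.le j) = y j := by
  obtain ⟨m, rfl⟩ : ∃ m, N = k + (m + 1) := ⟨N - k - 1, by omega⟩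
  set c := √((k + (m + 1) - ∑ j, y j ^ 2) / (m + 1))
  have hc : (m + 1) * c ^ 2 = k + (m + 1) - ∑ j, y j ^ 2 := by
    rw [Real.sq_sqrt (div_nonneg (by push_cast at hy; linarith) (by positivity))]
    field_simp
  refine ⟨Fin.append y fun _ : Fin (m + 1) => c, ?_, fun j => Fin.append_left y _ j⟩
  rw [Fin.sum_univ_add]
  simp only [Fin.append_left, Fin.append_right, Finset.sum_const, Finset.card_univ,
    Fintype.card_fin, nsmul_eq_mul]
  push_cast
  linarith

lemma eq_of_aeval_eq_on_sphere {k N : ℕ} (hkN : k < N) {p q : MvPolynomial (Fin k) ℂ}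
    (h : ∀ x : Fin N → ℝ, ∑ j, x j ^ 2 = N →
      aeval (fun j => (x (Fin.castLE hkN.le j) : ℂ)) p =
        aeval (fun j => (x (Fin.castLE hkN.le j) : ℂ)) q) :
    p = q := by
  refine funext_set (fun _ => (↑) '' Set.Ioo (-1 : ℝ) 1)
    (fun _ => (Set.Ioo_infinite (by norm_num)).image Complex.ofReal_injective.injOn)
    fun z hz => ?_
  choose y hy hyz using fun j => hz j trivial
  have hsum : ∑ j, y j ^ 2 ≤ N := calc
    ∑ j, y j ^ 2 ≤ ∑ _j : Fin k, (1 : ℝ) :=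
      Finset.sum_le_sum fun j _ => (sq_lt_one_iff_abs_lt_one _).2 (abs_lt.2 (hy j)) |>.le
    _ ≤ N := by simpa using hkN.le
  obtain ⟨x, hx, hxy⟩ := exists_sum_sq_eq_of_sum_sq_le hkN y hsum
  have hxz : (fun j => (x (Fin.castLE hkN.le j) : ℂ)) = z := funext fun j => by rw [hxy, hyz]
  exact hxz ▸ h x hx

theorem stmt4_general (k N : ℕ) (hkN : k < N) (f : MvPolynomial (Fin k) ℂ) :
    (∃! g : MvPolynomial (Fin k) ℂ, ∀ x : Fin N → ℝ, (∑ j, x j ^ 2) = (N : ℝ) →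
        aeval (fun j : Fin k => (x (Fin.castLE hkN.le j) : ℂ)) g
          = (1 / (N : ℂ)) *
              aeval (fun j : Fin N => (x j : ℂ)) (ang (rename (Fin.castLE hkN.le) f))) ∧
    (∀ x : Fin N → ℝ, (∑ j, x j ^ 2) = (N : ℝ) →
        aeval (fun j : Fin k => (x (Fin.castLE hkN.le j) : ℂ))
            (lap f - euler f + ((N : ℂ)⁻¹) • (2 • euler f - euler (euler f)))
          = (1 / (N : ℂ)) *
              aeval (fun j : Fin N => (x j : ℂ)) (ang (rename (Fin.castLE hkN.le) f))) := by
  have hformula := fun (x : Fin N → ℝ) (hx : ∑ j, x j ^ 2 = (N : ℝ)) =>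
    aeval_ang_rename_of_sum_sq_eq (Fin.castLE_injective hkN.le) f (by omega)
      (x := fun j => (x j : ℂ)) (by exact_mod_cast hx)
  refine ⟨⟨_, hformula, fun g hg => eq_of_aeval_eq_on_sphere hkN fun x hx => ?_⟩, hformula⟩
  exact (hg x hx).trans (hformula x hx).symm

/-- for `k < N` and a polynomial `f` in the first `k` variables, there is a unique
polynomial `g` in the first `k` variables agreeing on `S^{N-1}(√N)` with the spherical Laplacian
`(1/N) Σ_{i<j}(x_i∂_j − x_j∂_i)² f`, and `g = Δ_k f − (r∂_r)_k f + (1/N)(2(r∂_r)_k f − (r∂_r)_k² f)`. -/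
theorem stmt4 (k N : ℕ) (hk : 1 ≤ k) (hkN : k < N) (f : MvPolynomial (Fin k) ℂ) :
    (∃! g : MvPolynomial (Fin k) ℂ, ∀ x : Fin N → ℝ, (∑ j, x j ^ 2) = (N : ℝ) →
        aeval (fun j : Fin k => (x (Fin.castLE hkN.le j) : ℂ)) g
          = (1 / (N : ℂ)) *
              aeval (fun j : Fin N => (x j : ℂ)) (ang (rename (Fin.castLE hkN.le) f))) ∧
    (∀ x : Fin N → ℝ, (∑ j, x j ^ 2) = (N : ℝ) →
        aeval (fun j : Fin k => (x (Fin.castLE hkN.le j) : ℂ))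
            (lap f - euler f + ((N : ℂ)⁻¹) • (2 • euler f - euler (euler f)))
          = (1 / (N : ℂ)) *
              aeval (fun j : Fin N => (x j : ℂ)) (ang (rename (Fin.castLE hkN.le) f))) :=
  stmt4_general k N hkN f
end

section
/- Let V be a finite-dimensional complex vector space and let X, Y be linear endomorphisms of V such that [X, Y] = XY − YX = αY for some α ∈ ℂ that is not an integer multiple of 2πi (in particular α ≠ 0). Then exp(X) exp(Y) = exp(X + (α/(1 − e^{−α})) Y), exp(Y) exp(X) = exp(X − (α/(1 − e^{α})) Y), and exp(X + Y) = exp(X) exp(((1 − e^{−α})/α) Y), where exp denotes the operator exponential. -/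
/-!
From `X B = B (X + α)` one gets `exp X * B = e^α • B * exp X`, hence
`exp X * exp (s B) = exp (s e^α B) * exp X`. Summing the exponential series termwise,
`X * exp B = exp B * (X + α B)`, so `exp (X + α B) = exp (-B) * exp X * exp B`. Moving `exp (-B)`
past `exp X` with the first identity gives `exp (X + α B) = exp X * exp ((1 - e^{-α}) B)`, and all
three identities are this one with `B` a suitable multiple of `Y`; the condition on `α` makes
`1 - e^{±α}` invertible.
-/

open NormedSpace Nat

theorem mul_pow_sub_pow_mul_of_commutator {R A : Type*} [CommRing R] [Ring A] [Algebra R A]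
    {X B : A} {α : R} (h : X * B - B * X = α • B) (n : ℕ) :
    X * B ^ n - B ^ n * X = (n * α) • B ^ n := by
  induction n with
  | zero => simp
  | succ n ih =>
    calc X * B ^ (n + 1) - B ^ (n + 1) * X
        = (X * B ^ n - B ^ n * X) * B + B ^ n * (X * B - B * X) := by noncomm_ring
      _ = ((n + 1 : ℕ) * α) • B ^ (n + 1) := by
        rw [ih, h, smul_mul_assoc, mul_smul_comm, ← pow_succ, ← add_smul]
        push_cast; ring_nf

section BanachAlgebra

variable {A : Type*} [NormedRing A] [NormedAlgebra ℂ A] [CompleteSpace A] {X B : A} {α : ℂ}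

theorem mul_exp_of_commutator (h : X * B - B * X = α • B) :
    X * exp B = exp B * (X + α • B) := by
  have hB := exp_series_hasSum_exp' (𝕂 := ℂ) B
  have hcomm := (hasSum_nat_add_iff' 1).mpr ((hB.mul_left X).sub (hB.mul_right X))
  have hterm (n : ℕ) :
      X * (((n + 1) ! : ℂ)⁻¹ • B ^ (n + 1)) - (((n + 1) ! : ℂ)⁻¹ • B ^ (n + 1)) * X
        = α • (((n ! : ℂ)⁻¹ • B ^ n) * B) := by
    rw [mul_smul_comm, smul_mul_assoc, ← smul_sub, mul_pow_sub_pow_mul_of_commutator h,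
      smul_mul_assoc, ← pow_succ, smul_smul, smul_smul]
    congr 1
    push_cast [factorial_succ]
    field_simp
  simp only [hterm, Finset.range_one, Finset.sum_singleton, pow_zero, factorial_zero, cast_one,
    inv_one, one_smul, mul_one, one_mul, sub_self, sub_zero] at hcomm
  rw [mul_add, mul_smul_comm, ← hcomm.unique ((hB.mul_right B).const_smul α)]
  abel

theorem exp_add_smul_eq_exp_neg_mul_mul_exp_of_commutator (h : X * B - B * X = α • B) :
    exp (X + α • B) = exp (-B) * exp X * exp B := by
  let +nondep : NormedAlgebra ℚ A := .restrictScalars ℚ ℂ A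
  have hconj : exp B * exp (X + α • B) = exp X * exp B :=
    SemiconjBy.exp_right (mul_exp_of_commutator h).symm
  rw [mul_assoc, ← hconj, ← mul_assoc, ← exp_add_of_commute (Commute.refl B).neg_left,
    neg_add_cancel, exp_zero, one_mul]

theorem exp_mul_eq_smul_mul_exp_of_commutator (h : X * B - B * X = α • B) :
    exp X * B = Complex.exp α • (B * exp X) := by
  let +nondep : NormedAlgebra ℚ A := .restrictScalars ℚ ℂ A
  have hsemiconj : SemiconjBy B (algebraMap ℂ A α + X) X := by
    rw [SemiconjBy, mul_add, ← Algebra.commutes, ← Algebra.smul_def, ← h]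
    noncomm_ring
  rw [← hsemiconj.exp_right, exp_add_of_commute (Algebra.commutes α X), ← algebraMap_exp_comm,
    ← Complex.exp_eq_exp_ℂ, ← mul_assoc, ← Algebra.commutes, mul_assoc, ← Algebra.smul_def]

theorem exp_mul_exp_smul_of_commutator (h : X * B - B * X = α • B) (s : ℂ) :
    exp X * exp (s • B) = exp ((s * Complex.exp α) • B) * exp X := by
  let +nondep : NormedAlgebra ℚ A := .restrictScalars ℚ ℂ A
  refine SemiconjBy.exp_right ?_
  rw [SemiconjBy, mul_smul_comm, exp_mul_eq_smul_mul_exp_of_commutator h, smul_smul, mul_comm,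
    smul_mul_assoc]

theorem exp_add_smul_eq_exp_mul_exp_of_commutator (h : X * B - B * X = α • B) :
    exp (X + α • B) = exp X * exp ((1 - Complex.exp (-α)) • B) := by
  let +nondep : NormedAlgebra ℚ A := .restrictScalars ℚ ℂ A
  have hswap : exp (-B) * exp X = exp X * exp ((-Complex.exp (-α)) • B) := by
    rw [exp_mul_exp_smul_of_commutator h, neg_mul, ← Complex.exp_add, neg_add_cancel,
      Complex.exp_zero, neg_one_smul]
  rw [exp_add_smul_eq_exp_neg_mul_mul_exp_of_commutator h, hswap, mul_assoc, ← exp_add_of_commute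
    ((Commute.refl B).smul_left _), sub_eq_neg_add, add_smul, one_smul]

theorem exp_add_smul_eq_exp_mul_exp_smul_of_commutator (h : X * B - B * X = α • B) (c : ℂ) :
    exp (X + (α * c) • B) = exp X * exp (((1 - Complex.exp (-α)) * c) • B) := by
  have hc : X * (c • B) - (c • B) * X = α • (c • B) := by
    rw [mul_smul_comm, smul_mul_assoc, ← smul_sub, h, smul_comm]
  simpa only [smul_smul] using exp_add_smul_eq_exp_mul_exp_of_commutator hc

end BanachAlgebra

theorem Complex.one_sub_exp_ne_zero {α : ℂ} (hα : ∀ n : ℤ, α ≠ n * (2 * Real.pi * Complex.I)) :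
    1 - Complex.exp α ≠ 0 := by
  rw [sub_ne_zero, ne_comm, Ne, Complex.exp_eq_one_iff, not_exists]
  exact hα

/-- Baker–Campbell–Hausdorff-type identities for operators `X, Y` on a
finite-dimensional complex vector space satisfying `[X, Y] = αY` with `α` not an integer
multiple of `2πi`. -/
theorem stmt12 (V : Type*) [NormedAddCommGroup V] [NormedSpace ℂ V] [FiniteDimensional ℂ V]
    (X Y : V →L[ℂ] V) (α : ℂ)
    (hα : ∀ n : ℤ, α ≠ (n : ℂ) * (2 * Real.pi * Complex.I))
    (hcomm : X * Y - Y * X = α • Y) :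
    exp X * exp Y = exp (X + (α / (1 - Complex.exp (-α))) • Y) ∧
    exp Y * exp X = exp (X - (α / (1 - Complex.exp α)) • Y) ∧
    exp (X + Y) = exp X * exp (((1 - Complex.exp (-α)) / α) • Y) := by
  have : CompleteSpace V := FiniteDimensional.complete ℂ V
  have hα₀ : α ≠ 0 := by simpa using hα 0
  have hneg : 1 - Complex.exp (-α) ≠ 0 :=
    Complex.one_sub_exp_ne_zero fun n hn ↦ hα (-n) (by push_cast; linear_combination -hn)
  have hpos : 1 - Complex.exp α ≠ 0 := Complex.one_sub_exp_ne_zero hα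
  have key := exp_add_smul_eq_exp_mul_exp_smul_of_commutator hcomm
  refine ⟨?_, ?_, ?_⟩
  · simpa [div_eq_mul_inv, hneg] using (key (1 - Complex.exp (-α))⁻¹).symm
  · have hcoeff : (1 - Complex.exp (-α)) * -(1 - Complex.exp α)⁻¹ = Complex.exp (-α) := by
      rw [Complex.exp_neg]
      field_simp
      ring
    have hswap : exp Y * exp X = exp X * exp (Complex.exp (-α) • Y) := by
      rw [exp_mul_exp_smul_of_commutator hcomm, ← Complex.exp_add, neg_add_cancel,
        Complex.exp_zero, one_smul]
    rw [hswap, ← hcoeff, ← key, mul_neg, neg_smul, ← sub_eq_add_neg, ← div_eq_mul_inv]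
  · simpa [div_eq_mul_inv, hα₀] using key α⁻¹
end

section
/- Let k ≥ 1, T > 0, and let p be a polynomial in the variables x₁, …, x_k (with complex coefficients). Then the series Σ_{n=0}^∞ (1/n!) ((T/2)(Δ_k − (r∂_r)_k))^n p converges in the finite-dimensional space of polynomials of degree at most deg p (equivalently, coefficientwise), and its sum is the polynomial x ↦ (e^{((1−e^{−T})/2) Δ_k} p)(e^{−T/2} x₁, …, e^{−T/2} x_k), where e^{((1−e^{−T})/2) Δ_k} p = Σ_n (1/n!) ((1−e^{−T})/2)^n Δ_k^n p is a finite sum. In other words, e^{(T/2)(Δ_k − (r∂_r)_k)} p = e^{−(T/2)(r∂_r)_k} e^{((1−e^{−T})/2)Δ_k} p. -/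
open MvPolynomial

/-- The (terminating) heat operator `e^{(t/2)Δ_k}` on polynomials. -/
noncomputable def heatOp {k : ℕ} (t : ℝ) (p : MvPolynomial (Fin k) ℂ) :
    MvPolynomial (Fin k) ℂ :=
  ∑ n ∈ Finset.range (p.totalDegree + 1),
    (((t / 2 : ℝ) : ℂ) ^ n / (n.factorial : ℂ)) • lap^[n] p

/-!
On a homogeneous polynomial of degree `d` the Euler operator `E = (r∂_r)_k` acts by `d`, and
`[E, Δ] = -2Δ`. Hence for `r` homogeneous of degree `d` the polynomial `e^{-Δ/2} r` is an
eigenvector of `H = Δ - E` with eigenvalue `-d` (a Hermite polynomial). Writing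
`p = e^{-Δ/2} e^{Δ/2} p` and splitting `e^{Δ/2} p = Σ_d r_d` into homogeneous components
expands `p` in eigenvectors of `H`, so the series is a finite sum of scalar exponential series,
with sum `Σ_d e^{-dT/2} e^{-Δ/2} r_d`. With `c = e^{-T/2}`, the dilation `D_c` multiplies degree
`d` by `c^d` and satisfies `Δ D_c = c² D_c Δ`, so this sum is
`D_c e^{-c²Δ/2} e^{Δ/2} p = D_c e^{(1-c²)Δ/2} p`. Every exponential of `Δ` here is a finite sum,
because `Δ` lowers the degree by two.
-/

open Finset

section TruncExp

variable {𝕜 M : Type*} [Field 𝕜] [AddCommGroup M] [Module 𝕜 M]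

/-- On vectors killed by `L ^ N` this is the exponential `e^{zL}`. -/
noncomputable def truncExp (L : Module.End 𝕜 M) (N : ℕ) (z : 𝕜) : Module.End 𝕜 M :=
  ∑ n ∈ range N, (z ^ n / n.factorial) • L ^ n

variable (L : Module.End 𝕜 M) {N : ℕ} {v : M}

lemma truncExp_apply (N : ℕ) (z : 𝕜) (v : M) :
    truncExp L N z v = ∑ n ∈ range N, (z ^ n / n.factorial) • (L ^ n) v := by
  simp only [truncExp, LinearMap.sum_apply, LinearMap.smul_apply]

lemma pow_apply_eq_zero_of_le (hv : (L ^ N) v = 0) {n : ℕ} (hn : N ≤ n) : (L ^ n) v = 0 := by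
  rw [← Nat.sub_add_cancel hn, pow_add, Module.End.mul_apply, hv, map_zero]

lemma truncExp_apply_of_le (hv : (L ^ N) v = 0) {N' : ℕ} (h : N ≤ N') (z : 𝕜) :
    truncExp L N' z v = truncExp L N z v := by
  rw [truncExp_apply, truncExp_apply]
  refine (sum_subset (range_subset_range.2 h) fun n _ hn => ?_).symm
  rw [pow_apply_eq_zero_of_le L hv (not_lt.1 (mem_range.not.1 hn)), smul_zero]

lemma truncExp_zero (hN : 0 < N) : truncExp L N 0 = 1 := by
  rw [truncExp, sum_eq_single_of_mem 0 (mem_range.2 hN) fun n _ hn => by simp [hn]]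
  simp

lemma add_pow_div_factorial [CharZero 𝕜] (a b : 𝕜) (n : ℕ) :
    (a + b) ^ n / n.factorial =
      ∑ i ∈ range (n + 1), a ^ i / i.factorial * (b ^ (n - i) / (n - i).factorial) := by
  rw [add_pow, sum_div]
  refine sum_congr rfl fun i hi => ?_
  have : (n.factorial : 𝕜) ≠ 0 := Nat.cast_ne_zero.2 n.factorial_ne_zero
  rw [Nat.cast_choose 𝕜 (Nat.lt_succ_iff.1 (mem_range.1 hi))]
  field_simp

lemma truncExp_apply_truncExp [CharZero 𝕜] (hv : (L ^ N) v = 0) (a b : 𝕜) :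
    truncExp L N a (truncExp L N b v) = truncExp L N (a + b) v := by
  calc truncExp L N a (truncExp L N b v)
      = ∑ i ∈ range N, ∑ j ∈ range N,
          (a ^ i / i.factorial * (b ^ j / j.factorial)) • (L ^ (i + j)) v := by
        simp only [truncExp_apply, map_sum, map_smul]
        simp only [smul_sum, smul_smul, ← Module.End.mul_apply, ← pow_add]
        rw [sum_comm]
        simp only [mul_comm]
    _ = ∑ i ∈ range N, ∑ j ∈ range (N - i),
          (a ^ i / i.factorial * (b ^ j / j.factorial)) • (L ^ (i + j)) v := by
        refine sum_congr rfl fun i _ => (sum_subset (range_subset_range.2 (Nat.sub_le N i))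
          fun j _ hj => ?_).symm
        rw [pow_apply_eq_zero_of_le L hv (by simp at hj; omega), smul_zero]
    _ = ∑ n ∈ range N, ∑ i ∈ range (n + 1),
          (a ^ i / i.factorial * (b ^ (n - i) / (n - i).factorial)) • (L ^ (i + (n - i))) v :=
        (sum_range_diag_flip N fun i j =>
          (a ^ i / i.factorial * (b ^ j / j.factorial)) • (L ^ (i + j)) v).symm
    _ = truncExp L N (a + b) v := by
        rw [truncExp_apply]
        refine sum_congr rfl fun n _ => ?_
        rw [add_pow_div_factorial, sum_smul]
        refine sum_congr rfl fun i hi => ?_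
        rw [Nat.add_sub_cancel' (Nat.lt_succ_iff.1 (mem_range.1 hi))]

lemma truncExp_mul_of_mul_eq {D : Module.End 𝕜 M} {s : 𝕜} (h : L * D = s • (D * L)) (z : 𝕜) :
    truncExp L N z * D = D * truncExp L N (s * z) := by
  have hpow : ∀ n : ℕ, L ^ n * D = s ^ n • (D * L ^ n) := by
    intro n
    induction n with
    | zero => simp
    | succ n ih =>
      rw [pow_succ', mul_assoc, ih, mul_smul_comm, ← mul_assoc, h, smul_mul_assoc, smul_smul,
        mul_assoc, ← pow_succ', ← pow_succ]
  simp only [truncExp, sum_mul, mul_sum, smul_mul_assoc, hpow, mul_smul_comm, smul_smul, mul_pow]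
  refine sum_congr rfl fun n _ => ?_
  ring_nf

lemma mul_pow_eq_of_mul_eq {E : Module.End 𝕜 M} (hEL : E * L = L * E - (2 : 𝕜) • L) (j : ℕ) :
    E * L ^ j = L ^ j * E - (2 * j : 𝕜) • L ^ j := by
  induction j with
  | zero => simp
  | succ j ih =>
    rw [pow_succ, ← mul_assoc, ih, sub_mul, mul_assoc, hEL, mul_sub, ← mul_assoc, ← pow_succ,
      smul_mul_assoc, mul_smul_comm, ← pow_succ]
    push_cast
    module

lemma sub_apply_truncExp_neg_half [CharZero 𝕜] {E : Module.End 𝕜 M} {d : 𝕜}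
    (hEL : E * L = L * E - (2 : 𝕜) • L) (hv : E v = d • v) (hN : (L ^ N) v = 0) :
    (L - E) (truncExp L N (-1 / 2) v) = (-d) • truncExp L N (-1 / 2) v := by
  set c : ℕ → 𝕜 := fun j => (-1 / 2) ^ j / j.factorial
  have hE : ∀ j : ℕ, E ((L ^ j) v) = (d - 2 * j) • (L ^ j) v := fun j => by
    rw [← Module.End.mul_apply, mul_pow_eq_of_mul_eq L hEL, LinearMap.sub_apply,
      Module.End.mul_apply, hv, map_smul, LinearMap.smul_apply, sub_smul]
  have hc : ∀ j : ℕ, 2 * (j + 1 : ℕ) * c (j + 1) = -c j := fun j => by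
    have : (j.factorial : 𝕜) ≠ 0 := Nat.cast_ne_zero.2 j.factorial_ne_zero
    simp only [c, Nat.factorial_succ]
    push_cast
    field_simp
    ring
  have hshift : ∑ j ∈ range N, c j • (L ^ (j + 1)) v
      = -∑ j ∈ range N, (2 * j * c j) • (L ^ j) v := by
    have h := sum_range_succ' (fun j => (2 * j * c j) • (L ^ j) v) N
    rw [sum_range_succ, hN, smul_zero, add_zero] at h
    simp only [h, hc, Nat.cast_zero, mul_zero, zero_mul, zero_smul, add_zero, neg_smul,
      sum_neg_distrib, neg_neg]
  calc (L - E) (truncExp L N (-1 / 2) v)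
      = ∑ j ∈ range N, c j • (L ^ (j + 1)) v
          - ∑ j ∈ range N, c j • (d - 2 * j) • (L ^ j) v := by
        simp only [truncExp_apply, LinearMap.sub_apply, map_sum, map_smul, hE, pow_succ',
          Module.End.mul_apply, smul_sub, sum_sub_distrib, c]
    _ = (-d) • truncExp L N (-1 / 2) v := by
        rw [hshift, truncExp_apply, smul_sum, ← sum_neg_distrib, ← sum_sub_distrib]
        refine sum_congr rfl fun j _ => ?_
        module

end TruncExp

namespace MvPolynomial

variable {σ R : Type*} [CommSemiring R] {q : MvPolynomial σ R}

lemma pderiv_eq_zero_of_isHomogeneous_zero (hq : q.IsHomogeneous 0) (i : σ) : pderiv i q = 0 := by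
  rw [← totalDegree_zero_iff_isHomogeneous, totalDegree_eq_zero_iff_eq_C] at hq
  rw [hq, pderiv_C]

lemma linearMap_ext_of_isHomogeneous {M : Type*} [AddCommMonoid M] [Module R M]
    {f g : MvPolynomial σ R →ₗ[R] M} (h : ∀ d q, q.IsHomogeneous d → f q = g q) : f = g :=
  linearMap_ext fun _ => LinearMap.ext fun r => h _ _ (isHomogeneous_monomial r rfl)

noncomputable def dilate (c : R) : MvPolynomial σ R →ₐ[R] MvPolynomial σ R :=
  aeval fun i => C c * X i

lemma dilate_monomial (c : R) (s : σ →₀ ℕ) (r : R) :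
    dilate c (monomial s r) = c ^ s.degree • monomial s r := by
  rw [dilate, aeval_monomial, smul_eq_C_mul, monomial_eq]
  simp only [mul_pow, Finsupp.prod, prod_mul_distrib, prod_pow_eq_pow_sum, Finsupp.degree_apply,
    algebraMap_eq, C_pow]
  ring

lemma IsHomogeneous.dilate {q : MvPolynomial σ R} {d : ℕ} (hq : q.IsHomogeneous d) (c : R) :
    dilate c q = c ^ d • q := by
  conv_lhs => rw [q.as_sum]
  conv_rhs => rw [q.as_sum]
  rw [map_sum, smul_sum]
  refine sum_congr rfl fun s hs => ?_
  rw [dilate_monomial, ← hq (mem_support_iff.1 hs), Finsupp.degree_eq_weight_one]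
  rfl

lemma sum_homogeneousComponent_of_totalDegree_lt {q : MvPolynomial σ R} {N : ℕ}
    (h : q.totalDegree < N) : ∑ d ∈ range N, homogeneousComponent d q = q := by
  rw [← sum_subset (range_subset_range.2 h) fun d _ hd =>
    homogeneousComponent_eq_zero _ _ (by simp at hd; omega)]
  exact sum_homogeneousComponent q

end MvPolynomial

section Hermite

variable {k : ℕ} {q : MvPolynomial (Fin k) ℂ} {d : ℕ}

noncomputable def lapLM (k : ℕ) : Module.End ℂ (MvPolynomial (Fin k) ℂ) :=
  ∑ j, (pderiv j).toLinearMap * (pderiv j).toLinearMap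

noncomputable def eulerLM (k : ℕ) : Module.End ℂ (MvPolynomial (Fin k) ℂ) :=
  ∑ j, LinearMap.mulLeft ℂ (X j) * (pderiv j).toLinearMap

@[simp] lemma lapLM_apply (q : MvPolynomial (Fin k) ℂ) : lapLM k q = lap q := by
  simp [lapLM, lap, LinearMap.sum_apply]

lemma coe_lapLM : ⇑(lapLM k) = lap := funext lapLM_apply

@[simp] lemma eulerLM_apply (q : MvPolynomial (Fin k) ℂ) : eulerLM k q = euler q := by
  simp [eulerLM, euler, LinearMap.sum_apply]

lemma coe_lapLM_sub_eulerLM : ⇑(lapLM k - eulerLM k) = fun q => lap q - euler q :=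
  funext fun q => by simp

lemma MvPolynomial.IsHomogeneous.lap (hq : q.IsHomogeneous d) :
    (_root_.lap q).IsHomogeneous (d - 2) :=
  IsHomogeneous.sum _ _ _ fun j _ => by
    simpa [Nat.sub_sub] using (hq.pderiv (i := j)).pderiv (i := j)

lemma MvPolynomial.IsHomogeneous.lap_eq_zero (hq : q.IsHomogeneous d) (hd : d < 2) :
    _root_.lap q = 0 :=
  sum_eq_zero fun j _ => pderiv_eq_zero_of_isHomogeneous_zero
    (by simpa [show d - 1 = 0 by omega] using hq.pderiv (i := j)) j

lemma MvPolynomial.IsHomogeneous.euler (hq : q.IsHomogeneous d) :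
    _root_.euler q = (d : ℂ) • q := by
  rw [_root_.euler, hq.sum_X_mul_pderiv, Nat.cast_smul_eq_nsmul]

lemma MvPolynomial.IsHomogeneous.lapLM_pow (hq : q.IsHomogeneous d) (n : ℕ) :
    ((lapLM k ^ n) q).IsHomogeneous (d - 2 * n) := by
  induction n with
  | zero => simpa using hq
  | succ n ih => simpa [pow_succ', Nat.sub_sub, Nat.mul_succ] using ih.lap

lemma MvPolynomial.IsHomogeneous.lapLM_pow_eq_zero (hq : q.IsHomogeneous d) {n : ℕ}
    (hn : d < 2 * n) : (lapLM k ^ n) q = 0 := by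
  obtain ⟨n, rfl⟩ : ∃ n', n = n' + 1 := Nat.exists_eq_succ_of_ne_zero (by omega)
  rw [pow_succ', Module.End.mul_apply, lapLM_apply, (hq.lapLM_pow n).lap_eq_zero (by omega)]

lemma lapLM_pow_apply_eq_sum (q : MvPolynomial (Fin k) ℂ) (n : ℕ) :
    (lapLM k ^ n) q =
      ∑ d ∈ range (q.totalDegree + 1), (lapLM k ^ n) (homogeneousComponent d q) := by
  conv_lhs => rw [← sum_homogeneousComponent q]
  exact map_sum _ _ _

lemma totalDegree_lapLM_pow_le (q : MvPolynomial (Fin k) ℂ) (n : ℕ) :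
    ((lapLM k ^ n) q).totalDegree ≤ q.totalDegree := by
  rw [lapLM_pow_apply_eq_sum]
  refine (totalDegree_finsetSum ..).trans (Finset.sup_le fun d hd => ?_)
  exact ((homogeneousComponent_isHomogeneous d q).lapLM_pow n).totalDegree_le.trans
    (by simp at hd; omega)

lemma lapLM_pow_apply_eq_zero {N : ℕ} (hN : q.totalDegree < N) : (lapLM k ^ N) q = 0 := by
  rw [lapLM_pow_apply_eq_sum]
  exact sum_eq_zero fun d hd =>
    (homogeneousComponent_isHomogeneous d q).lapLM_pow_eq_zero (by simp at hd; omega)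

lemma eulerLM_mul_lapLM : eulerLM k * lapLM k = lapLM k * eulerLM k - (2 : ℂ) • lapLM k := by
  refine linearMap_ext_of_isHomogeneous fun d q hq => ?_
  simp only [Module.End.mul_apply, LinearMap.sub_apply, LinearMap.smul_apply, lapLM_apply,
    eulerLM_apply, hq.lap.euler, hq.euler, map_smul]
  rcases lt_or_ge d 2 with hd | hd
  · simp [hq.lap_eq_zero hd]
  · rw [Nat.cast_sub hd]
    module

lemma lapLM_mul_dilate (c : ℂ) :
    lapLM k * (dilate c).toLinearMap = c ^ 2 • ((dilate c).toLinearMap * lapLM k) := by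
  refine linearMap_ext_of_isHomogeneous fun d q hq => ?_
  simp only [Module.End.mul_apply, LinearMap.smul_apply, AlgHom.toLinearMap_apply, hq.dilate,
    map_smul, lapLM_apply, hq.lap.dilate]
  rcases lt_or_ge d 2 with hd | hd
  · simp [hq.lap_eq_zero hd]
  · rw [smul_smul, ← pow_add, Nat.add_sub_cancel' hd]

lemma totalDegree_truncExp_lapLM_le (N : ℕ) (z : ℂ) (q : MvPolynomial (Fin k) ℂ) :
    (truncExp (lapLM k) N z q).totalDegree ≤ q.totalDegree := by
  rw [truncExp_apply]
  exact (totalDegree_finsetSum ..).trans (Finset.sup_le fun n _ =>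
    (totalDegree_smul_le _ _).trans (totalDegree_lapLM_pow_le q n))

lemma heatOp_eq_truncExp (t : ℝ) {N : ℕ} (hN : q.totalDegree < N) :
    heatOp t q = truncExp (lapLM k) N ((t / 2 : ℝ) : ℂ) q := by
  rw [truncExp_apply_of_le _ (lapLM_pow_apply_eq_zero (Nat.lt_succ_self _)) hN, truncExp_apply]
  simp only [heatOp, Module.End.pow_apply, coe_lapLM]

/-- `e^{-Δ/2} (e^{Δ/2} p)_d`; when `p.totalDegree < N` it is the component of `p` in the
eigenspace of `H = Δ - E` for the eigenvalue `-d`. -/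
noncomputable def hermiteComponent (N d : ℕ) (p : MvPolynomial (Fin k) ℂ) :
    MvPolynomial (Fin k) ℂ :=
  truncExp (lapLM k) N (-1 / 2) (homogeneousComponent d (truncExp (lapLM k) N (1 / 2) p))

lemma sum_hermiteComponent {p : MvPolynomial (Fin k) ℂ} {N : ℕ} (hN : p.totalDegree < N) :
    ∑ d ∈ range N, hermiteComponent N d p = p := by
  simp only [hermiteComponent]
  rw [← map_sum, sum_homogeneousComponent_of_totalDegree_lt
    ((totalDegree_truncExp_lapLM_le N _ p).trans_lt hN),
    truncExp_apply_truncExp _ (lapLM_pow_apply_eq_zero hN), neg_div, neg_add_cancel,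
    truncExp_zero _ (by omega), Module.End.one_apply]

lemma lapLM_sub_eulerLM_pow_hermiteComponent (p : MvPolynomial (Fin k) ℂ) {N : ℕ} (hd : d < N)
    (n : ℕ) : ((lapLM k - eulerLM k) ^ n) (hermiteComponent N d p)
      = (-(d : ℂ)) ^ n • hermiteComponent N d p := by
  have hr := homogeneousComponent_isHomogeneous d (truncExp (lapLM k) N (1 / 2) p)
  have h := sub_apply_truncExp_neg_half (lapLM k) eulerLM_mul_lapLM
    (by rw [eulerLM_apply, hr.euler]) (lapLM_pow_apply_eq_zero (hr.totalDegree_le.trans_lt hd))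
  induction n with
  | zero => simp
  | succ n ih =>
    rw [pow_succ, Module.End.mul_apply, hermiteComponent, h, map_smul, ← hermiteComponent, ih,
      smul_smul, ← pow_succ']

lemma sum_pow_smul_hermiteComponent {p : MvPolynomial (Fin k) ℂ} {N : ℕ}
    (hN : p.totalDegree < N) (c : ℂ) :
    ∑ d ∈ range N, c ^ d • hermiteComponent N d p
      = dilate c (truncExp (lapLM k) N ((1 - c ^ 2) / 2) p) := by
  set u := truncExp (lapLM k) N (1 / 2) p
  have hu : u.totalDegree < N := (totalDegree_truncExp_lapLM_le N _ p).trans_lt hN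
  calc ∑ d ∈ range N, c ^ d • hermiteComponent N d p
      = truncExp (lapLM k) N (-1 / 2) (dilate c u) := by
        conv_rhs => rw [← sum_homogeneousComponent_of_totalDegree_lt hu]
        rw [map_sum, map_sum]
        refine sum_congr rfl fun d _ => ?_
        rw [(homogeneousComponent_isHomogeneous d u).dilate, map_smul, hermiteComponent]
    _ = dilate c (truncExp (lapLM k) N (c ^ 2 * (-1 / 2)) u) :=
        LinearMap.congr_fun (truncExp_mul_of_mul_eq _ (lapLM_mul_dilate c) _) u
    _ = dilate c (truncExp (lapLM k) N ((1 - c ^ 2) / 2) p) := by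
        rw [truncExp_apply_truncExp _ (lapLM_pow_apply_eq_zero hN)]
        ring_nf

lemma iterate_lap_sub_euler {p : MvPolynomial (Fin k) ℂ} {N : ℕ} (hN : p.totalDegree < N)
    (n : ℕ) : (fun q => lap q - euler q)^[n] p
      = ∑ d ∈ range N, (-(d : ℂ)) ^ n • hermiteComponent N d p := by
  rw [← coe_lapLM_sub_eulerLM, ← Module.End.pow_apply]
  conv_lhs => rw [← sum_hermiteComponent hN]
  rw [map_sum]
  exact sum_congr rfl fun d hd => lapLM_sub_eulerLM_pow_hermiteComponent p (mem_range.1 hd) n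

lemma dilate_heatOp_eq_sum (T : ℝ) {p : MvPolynomial (Fin k) ℂ} {N : ℕ}
    (hN : p.totalDegree < N) :
    dilate ((Real.exp (-T / 2) : ℝ) : ℂ) (heatOp (1 - Real.exp (-T)) p)
      = ∑ d ∈ range N, Complex.exp (T / 2 * -d) • hermiteComponent N d p := by
  have hc : (((1 - Real.exp (-T)) / 2 : ℝ) : ℂ)
      = (1 - ((Real.exp (-T / 2) : ℝ) : ℂ) ^ 2) / 2 := by
    push_cast
    rw [← Complex.exp_nat_mul]
    ring_nf
  rw [heatOp_eq_truncExp _ hN, hc, ← sum_pow_smul_hermiteComponent hN]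
  refine sum_congr rfl fun d _ => ?_
  rw [Complex.ofReal_exp, ← Complex.exp_nat_mul]
  push_cast
  ring_nf

end Hermite

theorem stmt13_general (k : ℕ) (T : ℝ) (p : MvPolynomial (Fin k) ℂ)
    (m : Fin k →₀ ℕ) :
    HasSum
      (fun n : ℕ => ((T : ℂ) / 2) ^ n / (n.factorial : ℂ) *
        coeff m ((fun q => lap q - euler q)^[n] p))
      (coeff m
        (aeval (fun j : Fin k => (C ((Real.exp (-T / 2) : ℝ) : ℂ) : MvPolynomial (Fin k) ℂ) * X j)
          (heatOp (1 - Real.exp (-T)) p))) := by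
  change HasSum _ (coeff m (dilate ((Real.exp (-T / 2) : ℝ) : ℂ) _))
  obtain ⟨N, hN⟩ : ∃ N, p.totalDegree < N := ⟨_, Nat.lt_succ_self _⟩
  rw [dilate_heatOp_eq_sum T hN, coeff_sum]
  have hexp : ∀ d ∈ range N, HasSum
      (fun n => ((T : ℂ) / 2 * -d) ^ n / n.factorial * coeff m (hermiteComponent N d p))
      (coeff m (Complex.exp (T / 2 * -d) • hermiteComponent N d p)) := fun d _ => by
    rw [coeff_smul, smul_eq_mul, Complex.exp_eq_exp_ℂ]
    exact (NormedSpace.expSeries_div_hasSum_exp ((T : ℂ) / 2 * -d)).mul_right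
      (coeff m (hermiteComponent N d p))
  refine (hasSum_sum hexp).congr_fun fun n => ?_
  rw [iterate_lap_sub_euler hN, coeff_sum, mul_sum]
  refine sum_congr rfl fun d _ => ?_
  rw [coeff_smul, smul_eq_mul, mul_pow]
  ring

/-- the series `Σ_n (1/n!) ((T/2)(Δ_k − (r∂_r)_k))^n p` converges coefficientwise,
with sum the polynomial `x ↦ (e^{((1−e^{−T})/2)Δ_k} p)(e^{−T/2} x)`; that is,
`e^{(T/2)H} p = e^{−(T/2)(r∂_r)_k} e^{((1−e^{−T})/2)Δ_k} p`. -/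
theorem stmt13 (k : ℕ) (hk : 1 ≤ k) (T : ℝ) (hT : 0 < T) (p : MvPolynomial (Fin k) ℂ)
    (m : Fin k →₀ ℕ) :
    HasSum
      (fun n : ℕ => ((T : ℂ) / 2) ^ n / (n.factorial : ℂ) *
        coeff m ((fun q => lap q - euler q)^[n] p))
      (coeff m
        (aeval (fun j : Fin k => (C ((Real.exp (-T / 2) : ℝ) : ℂ) : MvPolynomial (Fin k) ℂ) * X j)
          (heatOp (1 - Real.exp (-T)) p))) :=
  stmt13_general k T p m
end

section
/- Let N ≥ 2 and b > 0. Define Φ on the set TS^{N−1}(b) = {(x, p) ∈ ℝ^N × ℝ^N : |x| = b, x·p = 0} by Φ(x, p) = cosh(|p|/b) x + i (b/|p|) sinh(|p|/b) p when p ≠ 0, and Φ(x, 0) = x. Then Φ is a bijection from TS^{N−1}(b) onto the quadric Q^{N−1}(b) = {a ∈ ℂ^N : a₁² + ⋯ + a_N² = b²}. -/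
/-!
Writing `a = u + i v`, the quadric is `|u|² - |v|² = b²`, `u·v = 0`. The map is a pair of radial
rescalings: the tangent vector `p` of norm `r` goes to a vector of norm `b sinh (r / b)` along the
same ray, undone by the same construction with `arsinh`, and the base point is multiplied by
`cosh (r / b)`, undone by normalising `u` back to norm `b`. Then `cosh² - sinh² = 1` shows that
the tangent bundle of the sphere and the quadric are mapped onto each other.
-/

open Real Set

section RadialRescale

variable {E : Type*} [NormedAddCommGroup E] [NormedSpace ℝ E]

-- At `p = 0` the junk value `b / 0 = 0` makes the result `0`.
noncomputable def radialRescale (f : ℝ → ℝ) (b : ℝ) (p : E) : E :=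
  (b / ‖p‖ * f (‖p‖ / b)) • p

variable {f g : ℝ → ℝ} {b : ℝ}

lemma norm_radialRescale (hb : 0 ≤ b) (hf : StrictMono f) (hf0 : f 0 = 0) (p : E) :
    ‖radialRescale f b p‖ = b * f (‖p‖ / b) := by
  have hft : 0 ≤ f (‖p‖ / b) := hf0 ▸ hf.monotone (by positivity)
  rw [radialRescale, norm_smul, Real.norm_of_nonneg (by positivity)]
  rcases (norm_nonneg p).eq_or_lt with hp | hp
  · simp [← hp, hf0]
  · field_simp

lemma radialRescale_radialRescale (hb : 0 < b) (hf : StrictMono f) (hf0 : f 0 = 0)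
    (hgf : ∀ t, g (f t) = t) (p : E) : radialRescale g b (radialRescale f b p) = p := by
  rcases eq_or_ne p 0 with rfl | hp
  · simp [radialRescale]
  have hft : 0 < f (‖p‖ / b) := hf0 ▸ hf (by positivity)
  rw [radialRescale, norm_radialRescale hb.le hf hf0, radialRescale, smul_smul,
    mul_div_cancel_left₀ _ hb.ne', hgf]
  convert one_smul ℝ p
  have := norm_pos_iff.mpr hp
  field_simp

end RadialRescale

section TangentSphere

variable {E : Type*} [NormedAddCommGroup E] [InnerProductSpace ℝ E] {b : ℝ}

def tangentSphere (b : ℝ) : Set (E × E) := {xp | ‖xp.1‖ = b ∧ inner ℝ xp.1 xp.2 = 0}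

def realQuadric (b : ℝ) : Set (E × E) :=
  {uv | ‖uv.1‖ ^ 2 - ‖uv.2‖ ^ 2 = b ^ 2 ∧ inner ℝ uv.1 uv.2 = 0}

noncomputable def tangentToQuadric (b : ℝ) (xp : E × E) : E × E :=
  (cosh (‖xp.2‖ / b) • xp.1, radialRescale sinh b xp.2)

noncomputable def quadricToTangent (b : ℝ) (uv : E × E) : E × E :=
  ((b / ‖uv.1‖) • uv.1, radialRescale arsinh b uv.2)

lemma mapsTo_tangentToQuadric (hb : 0 ≤ b) :
    MapsTo (tangentToQuadric b) (tangentSphere b) (realQuadric (E := E) b) := by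
  rintro ⟨x, p⟩ ⟨hx, hxp⟩
  refine ⟨?_, ?_⟩
  · rw [tangentToQuadric, norm_radialRescale hb sinh_strictMono sinh_zero, norm_smul,
      Real.norm_of_nonneg (cosh_pos _).le, hx]
    linear_combination b ^ 2 * cosh_sq_sub_sinh_sq (‖p‖ / b)
  · simp only [tangentToQuadric, radialRescale, real_inner_smul_left, real_inner_smul_right, hxp,
      mul_zero]

lemma norm_fst_of_mem_realQuadric {uv : E × E} (h : uv ∈ realQuadric b) :
    ‖uv.1‖ = √(b ^ 2 + ‖uv.2‖ ^ 2) := by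
  rw [← h.1, sub_add_cancel, sqrt_sq (norm_nonneg _)]

lemma mapsTo_quadricToTangent (hb : 0 < b) :
    MapsTo (quadricToTangent b) (realQuadric b) (tangentSphere (E := E) b) := by
  rintro ⟨u, v⟩ huv
  have hu : 0 < ‖u‖ := by rw [norm_fst_of_mem_realQuadric huv]; positivity
  refine ⟨?_, ?_⟩
  · rw [quadricToTangent, norm_smul, Real.norm_of_nonneg (by positivity)]
    field_simp
  · simp only [quadricToTangent, radialRescale, real_inner_smul_left, real_inner_smul_right,
      huv.2, mul_zero]

lemma leftInvOn_quadricToTangent (hb : 0 < b) :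
    LeftInvOn (quadricToTangent b) (tangentToQuadric b) (tangentSphere (E := E) b) := by
  rintro ⟨x, p⟩ ⟨hx, -⟩
  have hu : ‖cosh (‖p‖ / b) • x‖ = b * cosh (‖p‖ / b) := by
    rw [norm_smul, Real.norm_of_nonneg (cosh_pos _).le, hx, mul_comm]
  simp only [quadricToTangent, tangentToQuadric, hu, smul_smul,
    radialRescale_radialRescale hb sinh_strictMono sinh_zero arsinh_sinh]
  rw [div_mul_cancel_left₀ hb.ne', inv_mul_cancel₀ (cosh_pos _).ne', one_smul]

lemma rightInvOn_quadricToTangent (hb : 0 < b) :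
    RightInvOn (quadricToTangent b) (tangentToQuadric b) (realQuadric (E := E) b) := by
  rintro ⟨u, v⟩ huv
  have hu := norm_fst_of_mem_realQuadric huv
  have hcosh : cosh (‖radialRescale arsinh b v‖ / b) = ‖u‖ / b := by
    rw [norm_radialRescale hb.le arsinh_strictMono arsinh_zero, mul_div_cancel_left₀ _ hb.ne',
      cosh_arsinh, hu, show 1 + (‖v‖ / b) ^ 2 = (b ^ 2 + ‖v‖ ^ 2) / b ^ 2 by field_simp,
      sqrt_div' _ (sq_nonneg b), sqrt_sq hb.le]
  have hu0 : 0 < ‖u‖ := by rw [hu]; positivity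
  simp only [quadricToTangent, tangentToQuadric, hcosh, smul_smul,
    radialRescale_radialRescale hb arsinh_strictMono arsinh_zero sinh_arsinh]
  rw [div_mul_div_cancel₀ hb.ne', div_self hu0.ne', one_smul]

theorem bijOn_tangentToQuadric (hb : 0 < b) :
    BijOn (tangentToQuadric b) (tangentSphere b) (realQuadric (E := E) b) :=
  InvOn.bijOn ⟨leftInvOn_quadricToTangent hb, rightInvOn_quadricToTangent hb⟩
    (mapsTo_tangentToQuadric hb.le) (mapsTo_quadricToTangent hb)

end TangentSphere

section Coordinates

open Complex (I)

variable {ι : Type*} [Fintype ι]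

lemma sum_ofReal_add_I_mul_sq (u v : ι → ℝ) :
    ∑ j, ((u j : ℂ) + I * v j) ^ 2 =
      ((∑ j, u j ^ 2 - ∑ j, v j ^ 2 : ℝ) : ℂ) + I * ((2 * ∑ j, u j * v j : ℝ) : ℂ) := by
  push_cast
  rw [Finset.mul_sum, Finset.mul_sum, ← Finset.sum_sub_distrib, ← Finset.sum_add_distrib]
  refine Finset.sum_congr rfl fun j _ => ?_
  linear_combination (v j : ℂ) ^ 2 * Complex.I_sq

noncomputable def complexify : EuclideanSpace ℝ ι × EuclideanSpace ℝ ι ≃ (ι → ℂ) where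
  toFun uv j := (uv.1 j : ℂ) + I * uv.2 j
  invFun a := (WithLp.toLp 2 fun j => (a j).re, WithLp.toLp 2 fun j => (a j).im)
  left_inv uv := by ext <;> simp
  right_inv a := funext fun j => by simp [mul_comm I, Complex.re_add_im]

lemma mem_realQuadric_iff_sum_complexify_sq {b : ℝ}
    {uv : EuclideanSpace ℝ ι × EuclideanSpace ℝ ι} :
    uv ∈ realQuadric b ↔ ∑ j, complexify uv j ^ 2 = (b : ℂ) ^ 2 := by
  rw [complexify, Equiv.coe_fn_mk, sum_ofReal_add_I_mul_sq, ← Complex.ofReal_pow, Complex.ext_iff]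
  simp only [Complex.add_re, Complex.add_im, Complex.ofReal_re, Complex.ofReal_im]
  simp [realQuadric, EuclideanSpace.real_norm_sq_eq, PiLp.inner_apply, mul_comm]

lemma sqrt_sum_sq_eq_norm (v : ι → ℝ) : √(∑ i, v i ^ 2) = ‖WithLp.toLp 2 v‖ := by
  simp [EuclideanSpace.norm_eq]

lemma toLp_mem_tangentSphere_iff {b : ℝ} (hb : 0 ≤ b) {x p : ι → ℝ} :
    (WithLp.toLp 2 x, WithLp.toLp 2 p) ∈ tangentSphere b ↔
      ∑ j, x j ^ 2 = b ^ 2 ∧ ∑ j, x j * p j = 0 := by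
  rw [tangentSphere, mem_ofPred_eq, ← sq_eq_sq₀ (norm_nonneg _) hb, EuclideanSpace.real_norm_sq_eq]
  simp [PiLp.inner_apply, mul_comm]

lemma complexify_tangentToQuadric_toLp (b : ℝ) (x p : ι → ℝ) :
    complexify (tangentToQuadric b (WithLp.toLp 2 x, WithLp.toLp 2 p)) = fun j =>
      if p = 0 then ((x j : ℝ) : ℂ)
      else ((cosh (√(∑ i, p i ^ 2) / b) * x j : ℝ) : ℂ) +
        I * ((b / √(∑ i, p i ^ 2) * sinh (√(∑ i, p i ^ 2) / b) * p j : ℝ) : ℂ) := by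
  funext j
  split_ifs with hp
  · simp [hp, complexify, tangentToQuadric, radialRescale]
  · simp [sqrt_sum_sq_eq_norm, complexify, tangentToQuadric, radialRescale]

end Coordinates

theorem stmt17_general (N : ℕ) (b : ℝ) (hb : 0 < b) :
    Set.BijOn
      (fun xp : (Fin N → ℝ) × (Fin N → ℝ) => fun j : Fin N =>
        if xp.2 = 0 then ((xp.1 j : ℝ) : ℂ)
        else
          ((Real.cosh (Real.sqrt (∑ i, xp.2 i ^ 2) / b) * xp.1 j : ℝ) : ℂ) +
            Complex.I * ((b / Real.sqrt (∑ i, xp.2 i ^ 2) *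
              Real.sinh (Real.sqrt (∑ i, xp.2 i ^ 2) / b) * xp.2 j : ℝ) : ℂ))
      {xp : (Fin N → ℝ) × (Fin N → ℝ) |
        (∑ j, xp.1 j ^ 2) = b ^ 2 ∧ (∑ j, xp.1 j * xp.2 j) = 0}
      {a : Fin N → ℂ | (∑ j, a j ^ 2) = (b : ℂ) ^ 2} := by
  let toEuclidean :
      (Fin N → ℝ) × (Fin N → ℝ) ≃ EuclideanSpace ℝ (Fin N) × EuclideanSpace ℝ (Fin N) :=
    (WithLp.equiv 2 (Fin N → ℝ)).symm.prodCongr (WithLp.equiv 2 (Fin N → ℝ)).symm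
  have hsphere : BijOn toEuclidean
      {xp | ∑ j, xp.1 j ^ 2 = b ^ 2 ∧ ∑ j, xp.1 j * xp.2 j = 0} (tangentSphere b) :=
    toEuclidean.bijOn fun _ => toLp_mem_tangentSphere_iff hb.le
  have hquadric :
      BijOn (complexify (ι := Fin N)) (realQuadric b) {a | ∑ j, a j ^ 2 = (b : ℂ) ^ 2} :=
    complexify.bijOn fun _ => mem_realQuadric_iff_sum_complexify_sq.symm
  exact (hquadric.comp ((bijOn_tangentToQuadric hb).comp hsphere)).congr fun xp _ =>
    complexify_tangentToQuadric_toLp b xp.1 xp.2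

/-- the map `Φ(x, p) = cosh(|p|/b) x + i (b/|p|) sinh(|p|/b) p` (with
`Φ(x, 0) = x`) is a bijection from the tangent bundle
`TS^{N-1}(b) = {(x,p) : |x| = b, x·p = 0}` onto the quadric
`Q^{N-1}(b) = {a ∈ ℂ^N : a₁² + ⋯ + a_N² = b²}`. -/
theorem stmt17 (N : ℕ) (hN : 2 ≤ N) (b : ℝ) (hb : 0 < b) :
    Set.BijOn
      (fun xp : (Fin N → ℝ) × (Fin N → ℝ) => fun j : Fin N =>
        if xp.2 = 0 then ((xp.1 j : ℝ) : ℂ)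
        else
          ((Real.cosh (Real.sqrt (∑ i, xp.2 i ^ 2) / b) * xp.1 j : ℝ) : ℂ) +
            Complex.I * ((b / Real.sqrt (∑ i, xp.2 i ^ 2) *
              Real.sinh (Real.sqrt (∑ i, xp.2 i ^ 2) / b) * xp.2 j : ℝ) : ℂ))
      {xp : (Fin N → ℝ) × (Fin N → ℝ) |
        (∑ j, xp.1 j ^ 2) = b ^ 2 ∧ (∑ j, xp.1 j * xp.2 j) = 0}
      {a : Fin N → ℂ | (∑ j, a j ^ 2) = (b : ℂ) ^ 2} :=
  stmt17_general N b hb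
end
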